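/- arXiv:2312.17130 — 7 statements merged into one kernel-verified Lean document; each statement's English description precedes it below -/
import Mathlib

section
/- Every graph G admits a partition of its vertex set into nonempty sets X_1,...,X_n such that: (1) each induced subgraph G[X_i] is bipartite and connected; (2) for all i < j, every vertex v ∈ X_j either has no neighbor in X_i, or has at least two neighbors in X_i lying on different sides of the bipartition of G[X_i]. -/
set_option linter.unusedVariables false

open SimpleGraph

/-- `G` contains `H` as an odd-minor: there are pairwise vertex-disjoint trees in `G`,
one for each vertex of `H`, and a 2-coloring of `V(G)` that is proper on each tree,
such that every edge of `H` is realized by a monochromatic edge of `G` between the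
corresponding trees. -/
def HasOddMinor {V W : Type*} (G : SimpleGraph V) (H : SimpleGraph W) : Prop :=
  ∃ (T : W → G.Subgraph) (c : V → Bool),
    (∀ w, (T w).coe.IsTree) ∧
    (∀ w w', w ≠ w' → Disjoint (T w).verts (T w').verts) ∧
    (∀ w, ∀ u v : V, (T w).Adj u v → c u ≠ c v) ∧
    (∀ w w', H.Adj w w' → ∃ u ∈ (T w).verts, ∃ v ∈ (T w').verts, G.Adj u v ∧ c u = c v)

/-- `G` contains `H` as a minor (branch-set formulation). -/
def HasMinor {V W : Type*} (G : SimpleGraph V) (H : SimpleGraph W) : Prop :=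
  ∃ (T : W → G.Subgraph),
    (∀ w, (T w).coe.Connected) ∧
    (∀ w w', w ≠ w' → Disjoint (T w).verts (T w').verts) ∧
    (∀ w w', H.Adj w w' → ∃ u ∈ (T w).verts, ∃ v ∈ (T w').verts, G.Adj u v)

def HasOddCliqueMinor {V : Type*} (G : SimpleGraph V) (k : ℕ) : Prop :=
  HasOddMinor G (⊤ : SimpleGraph (Fin k))

def HasCliqueMinor {V : Type*} (G : SimpleGraph V) (k : ℕ) : Prop :=
  HasMinor G (⊤ : SimpleGraph (Fin k))

/-- A zigzag of length `k` w.r.t. a coloring `c`: vertices with strictly increasing colors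
such that even-indexed and odd-indexed vertices are complete to each other. -/
def IsZigzag {V : Type*} (G : SimpleGraph V) (c : V → ℕ) {k : ℕ} (z : Fin k → V) : Prop :=
  StrictMono (c ∘ z) ∧
  ∀ i j : Fin k, i.val % 2 = 0 → j.val % 2 = 1 → G.Adj (z i) (z j)

/-- The zig-zag number: minimum over proper colorings of the maximum zigzag length. -/
noncomputable def zig {V : Type*} [Fintype V] (G : SimpleGraph V) : ℕ :=
  sInf { m | ∃ c : V → ℕ, (∀ u v, G.Adj u v → c u ≠ c v) ∧
    m = sSup { k | ∃ z : Fin k → V, IsZigzag G c z } }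

/-- The Kneser graph of a hypergraph given by its edge family. -/
def kneserOfFamily {α : Type*} (E : Set (Set α)) : SimpleGraph E where
  Adj e₁ e₂ := e₁ ≠ e₂ ∧ Disjoint (e₁ : Set α) (e₂ : Set α)
  symm := ⟨fun e₁ e₂ h => ⟨h.1.symm, h.2.symm⟩⟩
  loopless := ⟨fun e h => h.1 rfl⟩

/-- A hypergraph (given by its edge family) is 2-colorable if there is a 2-coloring
of the vertices with no monochromatic hyperedge. -/
def HypTwoColorable {α : Type*} (E : Set (Set α)) : Prop :=
  ∃ f : α → Bool, ∀ e ∈ E, (∃ x ∈ e, f x = true) ∧ (∃ x ∈ e, f x = false)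

/-- The Kneser graph `K(n,k)`. -/
def kneserGraph (n k : ℕ) : SimpleGraph {s : Finset (Fin n) // s.card = k} where
  Adj s t := s ≠ t ∧ Disjoint s.1 t.1
  symm := ⟨fun s t h => ⟨h.1.symm, h.2.symm⟩⟩
  loopless := ⟨fun s h => h.1 rfl⟩

/-- A subset of `[n]` (as `Fin n`) is cyclically stable if it contains no two
cyclically consecutive elements. -/
def CycStable {n : ℕ} (s : Finset (Fin n)) : Prop :=
  ∀ i ∈ s, ∀ j ∈ s, j.val ≠ (i.val + 1) % n

/-- The Schrijver graph `S(n,k)`. -/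
def schrijverGraph (n k : ℕ) :
    SimpleGraph {s : Finset (Fin n) // s.card = k ∧ CycStable s} where
  Adj s t := s ≠ t ∧ Disjoint s.1 t.1
  symm := ⟨fun s t h => ⟨h.1.symm, h.2.symm⟩⟩
  loopless := ⟨fun s h => h.1 rfl⟩



lemma connected_insert {V : Type*} (G : SimpleGraph V) (S : Set V) (v u : V)
    (hu : u ∈ S) (hadj : G.Adj v u) (hS : (G.induce S).Connected) :
    (G.induce (insert v S)).Connected := by
  haveI hne : Nonempty ↥(insert v S) := ⟨⟨v, Set.mem_insert _ _⟩⟩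
  refine SimpleGraph.Connected.mk ?_
  intro a b
  let φ : G.induce S →g G.induce (insert v S) :=
    ⟨fun a => ⟨a.1, Set.mem_insert_of_mem _ a.2⟩, fun h => h⟩
  have key : ∀ (b : ↥(insert v S)) (hb : b.1 ∈ S),
      (G.induce (insert v S)).Reachable ⟨v, Set.mem_insert _ _⟩ b := by
    intro b hb
    have h1 : (G.induce (insert v S)).Adj ⟨v, Set.mem_insert _ _⟩
        ⟨u, Set.mem_insert_of_mem _ hu⟩ := hadj
    have h2 := (hS.preconnected ⟨u, hu⟩ ⟨b.1, hb⟩).map φ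
    have : φ ⟨b.1, hb⟩ = b := Subtype.ext rfl
    rw [this] at h2
    exact h1.reachable.trans h2
  rcases a.2 with ha | ha
  · rcases b.2 with hb | hb
    · have : a = b := Subtype.ext (ha.trans hb.symm)
      rw [this]
    · have : a = ⟨v, Set.mem_insert _ _⟩ := Subtype.ext ha
      rw [this]; exact key b hb
  · rcases b.2 with hb | hb
    · have : b = ⟨v, Set.mem_insert _ _⟩ := Subtype.ext hb
      rw [this]; exact (key a ha).symm
    · have h2 := (hS.preconnected ⟨a.1, ha⟩ ⟨b.1, hb⟩).map φ
      have e1 : φ ⟨a.1, ha⟩ = a := Subtype.ext rfl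
      have e2 : φ ⟨b.1, hb⟩ = b := Subtype.ext rfl
      rwa [e1, e2] at h2

lemma aux_partition {V : Type*} [Fintype V] [DecidableEq V] (G : SimpleGraph V) :
    ∀ (R : Finset V),
    ∃ (n : ℕ) (X : Fin n → Set V),
      (∀ i, (X i).Nonempty) ∧
      (∀ i j, i ≠ j → Disjoint (X i) (X j)) ∧
      (⋃ i, X i) = ↑R ∧
      (∀ i, (G.induce (X i)).Connected) ∧
      (∀ i, ∃ f : V → Bool, ∀ u ∈ X i, ∀ v ∈ X i, G.Adj u v → f u ≠ f v) ∧
      (∀ i j, i < j → ∀ v ∈ X j, (∃ u ∈ X i, G.Adj v u) →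
        ∀ f : V → Bool, (∀ u ∈ X i, ∀ w ∈ X i, G.Adj u w → f u ≠ f w) →
          ∃ u₁ ∈ X i, ∃ u₂ ∈ X i, G.Adj v u₁ ∧ G.Adj v u₂ ∧ f u₁ ≠ f u₂) := by
  intro R
  induction R using Finset.strongInduction with
  | _ R ih =>
  classical
  rcases R.eq_empty_or_nonempty with rfl | ⟨v₀, hv₀⟩
  · exact ⟨0, Fin.elim0, fun i => i.elim0, fun i => i.elim0, by simp,
      fun i => i.elim0, fun i => i.elim0, fun i => i.elim0⟩
  -- pick a maximal connected bipartite subset of R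
  set P : Finset V → Prop := fun S => S ⊆ R ∧ S.Nonempty ∧ (G.induce ↑S).Connected ∧
      ∃ f : V → Bool, ∀ u ∈ S, ∀ w ∈ S, G.Adj u w → f u ≠ f w with hP
  have hsingle : P {v₀} := by
    refine ⟨Finset.singleton_subset_iff.mpr hv₀, ⟨v₀, Finset.mem_singleton_self _⟩, ?_, ?_⟩
    · haveI : Nonempty ↥(↑({v₀} : Finset V) : Set V) := ⟨⟨v₀, by simp⟩⟩
      refine SimpleGraph.Connected.mk ?_
      intro a b
      have : a = b := Subtype.ext (by
        have ha := a.2; have hb := b.2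
        simp only [Finset.coe_singleton, Set.mem_singleton_iff] at ha hb
        rw [ha, hb])
      rw [this]
    · exact ⟨fun _ => true, by
        intro u hu w hw hadj
        simp only [Finset.mem_singleton] at hu hw
        exact absurd (hu.trans hw.symm) hadj.ne⟩
  obtain ⟨S, hSmem, hSmax'⟩ := Finset.exists_maximal
    (s := (Finset.univ : Finset (Finset V)).filter P)
    ⟨{v₀}, Finset.mem_filter.mpr ⟨Finset.mem_univ _, hsingle⟩⟩
  have hSmax : ∀ x ∈ (Finset.univ : Finset (Finset V)).filter P, ¬ S < x :=
    fun x hx hlt => hlt.not_ge (hSmax' hx hlt.le)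
  rw [Finset.mem_filter] at hSmem
  obtain ⟨-, hSR, hSne, hScon, f₀, hf₀⟩ := hSmem
  -- recurse on R \ S
  have hss : R \ S ⊂ R := by
    obtain ⟨x, hx⟩ := hSne
    exact Finset.sdiff_ssubset hSR ⟨x, hx⟩
  obtain ⟨n, X', h1, h2, h3, h4, h5, h6⟩ := ih (R \ S) hss
  have hX'sub : ∀ i, X' i ⊆ ↑(R \ S) := by
    intro i
    rw [← h3]; exact Set.subset_iUnion X' i
  refine ⟨n + 1, Fin.cons (↑S) X', ?_, ?_, ?_, ?_, ?_, ?_⟩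
  · intro i
    refine Fin.cases ?_ ?_ i
    · simpa using hSne
    · intro i; simpa using h1 i
  · have hdisj : Disjoint (↑(R \ S) : Set V) (↑S : Set V) := by
      exact Finset.disjoint_coe.mpr Finset.sdiff_disjoint
    intro i j
    refine Fin.cases ?_ (fun i' => ?_) i <;> refine Fin.cases ?_ (fun j' => ?_) j <;>
      intro hij
    · exact absurd rfl hij
    · simp only [Fin.cons_zero, Fin.cons_succ]
      exact (hdisj.mono_left (hX'sub j')).symm
    · simp only [Fin.cons_zero, Fin.cons_succ]
      exact hdisj.mono_left (hX'sub i')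
    · simp only [Fin.cons_succ]
      exact h2 i' j' (fun h => hij (congrArg Fin.succ h))
  · ext x
    simp only [Set.mem_iUnion, Finset.mem_coe]
    constructor
    · rintro ⟨i, hi⟩
      refine Fin.cases ?_ ?_ i hi
      · intro hx; exact hSR (by simpa using hx)
      · intro i' hx
        have := hX'sub i' (by simpa using hx)
        simp only [Finset.coe_sdiff, Set.mem_diff, Finset.mem_coe] at this
        exact this.1
    · intro hx
      by_cases hxS : x ∈ S
      · exact ⟨0, by simpa using hxS⟩
      · have : x ∈ (↑(R \ S) : Set V) := by simp [hx, hxS]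
        rw [← h3] at this
        obtain ⟨i, hi⟩ := Set.mem_iUnion.mp this
        exact ⟨i.succ, by simpa using hi⟩
  · intro i
    refine Fin.cases ?_ ?_ i
    · exact hScon
    · intro i'; exact h4 i'
  · intro i
    refine Fin.cases ?_ ?_ i
    · exact ⟨f₀, by simpa using hf₀⟩
    · intro i'; simpa using h5 i'
  · intro i j hij
    refine Fin.cases ?_ ?_ j hij
    · intro h; exact absurd h (Fin.not_lt_zero i)
    intro j' hij
    refine Fin.cases ?_ ?_ i hij
    · -- the maximality case
      intro _ v hv hadj f hf
      simp only [Fin.cons_succ] at hv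
      simp only [Fin.cons_zero, Finset.mem_coe] at hadj hf ⊢
      by_contra hcon
      push_neg at hcon
      obtain ⟨u₀, hu₀S, hu₀adj⟩ := hadj
      have hvRS : v ∈ R \ S := by
        have := hX'sub j' hv
        simpa using this
      have hvS : v ∉ S := (Finset.mem_sdiff.mp hvRS).2
      have hvR : v ∈ R := (Finset.mem_sdiff.mp hvRS).1
      have hall : ∀ u ∈ S, G.Adj v u → f u = f u₀ := by
        intro u huS huadj
        by_contra hne
        exact hne (hcon u huS u₀ hu₀S huadj hu₀adj)
      -- extend coloring
      set f' : V → Bool := fun x => if x = v then !(f u₀) else f x with hf'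
      have hSins : P (insert v S) := by
        refine ⟨Finset.insert_subset hvR hSR, ⟨v, Finset.mem_insert_self _ _⟩, ?_, ?_⟩
        · rw [Finset.coe_insert]
          exact connected_insert G (↑S) v u₀ hu₀S hu₀adj hScon
        · refine ⟨f', ?_⟩
          intro u hu w hw hadj
          rcases Finset.mem_insert.mp hu with huv | huS
          · rcases Finset.mem_insert.mp hw with hwv | hwS
            · exact absurd (huv.trans hwv.symm) hadj.ne
            · have hwv : w ≠ v := fun h => hvS (h ▸ hwS)
              have hvw : G.Adj v w := huv ▸ hadj
              simp only [hf', if_pos huv, if_neg hwv]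
              rw [hall w hwS hvw]
              simp
          · rcases Finset.mem_insert.mp hw with hwv | hwS
            · have huv : u ≠ v := fun h => hvS (h ▸ huS)
              have hvu : G.Adj v u := hwv ▸ hadj.symm
              simp only [hf', if_pos hwv, if_neg huv]
              rw [hall u huS hvu]
              simp
            · have huv : u ≠ v := fun h => hvS (h ▸ huS)
              have hwv : w ≠ v := fun h => hvS (h ▸ hwS)
              simp only [hf', if_neg huv, if_neg hwv]
              exact hf u huS w hwS hadj
      exact hSmax (insert v S) (Finset.mem_filter.mpr ⟨Finset.mem_univ _, hSins⟩)
        (Finset.ssubset_insert hvS)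
    · -- recursive case
      intro i' hij v hv hadj f hf
      simp only [Fin.cons_succ] at hv hadj hf ⊢
      exact h6 i' j' (Fin.succ_lt_succ_iff.mp hij) v hv hadj f hf

/-- Every graph admits a partition of its vertex set into nonempty parts `X₁,…,Xₙ`
such that each `G[Xᵢ]` is connected and bipartite, and for `i < j` every vertex of
`X_j` with a neighbor in `X_i` has two neighbors in `X_i` on different sides of the
(unique) bipartition of `G[X_i]`. -/
theorem stmt5 {V : Type*} [Fintype V] (G : SimpleGraph V) :
    ∃ (n : ℕ) (X : Fin n → Set V),
      (∀ i, (X i).Nonempty) ∧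
      (∀ i j, i ≠ j → Disjoint (X i) (X j)) ∧
      (⋃ i, X i) = Set.univ ∧
      (∀ i, (G.induce (X i)).Connected) ∧
      (∀ i, ∃ f : V → Bool, ∀ u ∈ X i, ∀ v ∈ X i, G.Adj u v → f u ≠ f v) ∧
      (∀ i j : Fin n, i < j → ∀ v ∈ X j, (∃ u ∈ X i, G.Adj v u) →
        ∀ f : V → Bool, (∀ u ∈ X i, ∀ w ∈ X i, G.Adj u w → f u ≠ f w) →
          ∃ u₁ ∈ X i, ∃ u₂ ∈ X i, G.Adj v u₁ ∧ G.Adj v u₂ ∧ f u₁ ≠ f u₂) := by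
  classical
  obtain ⟨n, X, h1, h2, h3, h4, h5, h6⟩ := aux_partition G Finset.univ
  rw [Finset.coe_univ] at h3
  exact ⟨n, X, h1, h2, h3, h4, h5, h6⟩
end

section
/- For all nonnegative integers n_1, n_2 with n_1 + n_2 ≥ t, the graph K_{n_1} + K*_{n_2,n_2} contains K_t as a minor. -/
set_option linter.unusedVariables false

open SimpleGraph

def joinAdj {n₁ n₂ : ℕ} : (Fin n₁ ⊕ Fin n₂ × Bool) → (Fin n₁ ⊕ Fin n₂ × Bool) → Prop
  | Sum.inl a, Sum.inl b => a ≠ b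
  | Sum.inl _, Sum.inr _ => True
  | Sum.inr _, Sum.inl _ => True
  | Sum.inr (x, i), Sum.inr (y, j) => i ≠ j ∧ x ≠ y

/-- The join of `K_{n₁}` with `K*_{n₂,n₂}` (complete bipartite minus a perfect matching). -/
def joinKKstar (n₁ n₂ : ℕ) : SimpleGraph (Fin n₁ ⊕ Fin n₂ × Bool) where
  Adj := joinAdj
  symm := ⟨by rintro (a|⟨x,i⟩) (b|⟨y,j⟩) h <;> simp_all [joinAdj] <;> tauto⟩
  loopless := ⟨by rintro (a|⟨x,i⟩) h <;> simp_all [joinAdj]⟩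

lemma succ_mod_eq (n x : ℕ) (hx : x < n) :
    (x + 1) % n = if x + 1 = n then 0 else x + 1 := by
  split_ifs with h
  · simp [h]
  · exact Nat.mod_eq_of_lt (by omega)

lemma joinKKstar_adj {n₁ n₂ : ℕ} (x y : Fin n₁ ⊕ Fin n₂ × Bool) :
    (joinKKstar n₁ n₂).Adj x y ↔ joinAdj x y := Iff.rfl

/-- For all `n₁, n₂ ≥ 0` with `n₁ + n₂ ≥ t`, the join of `K_{n₁}` and
`K*_{n₂,n₂}` contains `K_t` as a minor. -/
theorem stmt8 (n₁ n₂ t : ℕ) (h : t ≤ n₁ + n₂) :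
    HasCliqueMinor (joinKKstar n₁ n₂) t := by
  classical
  have hsub : ∀ i : Fin t, ¬ i.val < n₁ → i.val - n₁ < n₂ := fun i hi => by
    have := i.isLt; omega
  by_cases hn2 : n₂ ≤ 2
  · -- small case: a clique of singletons
    let v : Fin t → (Fin n₁ ⊕ Fin n₂ × Bool) := fun i =>
      if hi : i.val < n₁ then Sum.inl ⟨i, hi⟩
      else Sum.inr (⟨i.val - n₁, hsub i hi⟩, decide (i.val - n₁ = 1))
    have hadj : ∀ i j : Fin t, i ≠ j → (joinKKstar n₁ n₂).Adj (v i) (v j) := by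
      intro i j hij
      have hij' : i.val ≠ j.val := fun e => hij (Fin.ext e)
      simp only [v]
      split_ifs with hi hj hj <;> rw [joinKKstar_adj]
      · simp only [joinAdj, Ne, Fin.mk.injEq]
        omega
      · exact trivial
      · exact trivial
      · refine ⟨?_, ?_⟩
        · have h1 : i.val - n₁ < 2 := by have := hsub i hi; omega
          have h2 : j.val - n₁ < 2 := by have := hsub j hj; omega
          rw [Ne, decide_eq_decide]
          omega
        · intro e
          rw [Fin.mk.injEq] at e
          omega
    refine ⟨fun i => (joinKKstar n₁ n₂).singletonSubgraph (v i),
      fun i => (Subgraph.singletonSubgraph_connected).coe, ?_, ?_⟩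
    · intro i j hij
      rw [singletonSubgraph_verts, singletonSubgraph_verts, Set.disjoint_singleton]
      exact (hadj i j hij).ne
    · intro i j hij
      exact ⟨v i, by simp [singletonSubgraph_verts], v j,
        by simp [singletonSubgraph_verts], hadj i j hij.ne⟩
  · -- n₂ ≥ 3
    push_neg at hn2
    have hmodlt : ∀ x : ℕ, (x + 1) % n₂ < n₂ := fun x => Nat.mod_lt _ (by omega)
    have key : ∀ i : Fin t, ∀ hi : ¬ i.val < n₁,
        (joinKKstar n₁ n₂).Adj (Sum.inr (⟨i.val - n₁, hsub i hi⟩, true))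
          (Sum.inr (⟨(i.val - n₁ + 1) % n₂, hmodlt _⟩, false)) := by
      intro i hi
      rw [joinKKstar_adj]
      refine ⟨by simp, ?_⟩
      intro e
      rw [Fin.mk.injEq] at e
      rw [succ_mod_eq n₂ _ (hsub i hi)] at e
      split_ifs at e <;> omega
    let T : Fin t → (joinKKstar n₁ n₂).Subgraph := fun i =>
      if hi : i.val < n₁ then (joinKKstar n₁ n₂).singletonSubgraph (Sum.inl ⟨i, hi⟩)
      else (joinKKstar n₁ n₂).subgraphOfAdj (key i hi)
    have hverts : ∀ i : Fin t, (T i).verts =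
        if hi : i.val < n₁ then {Sum.inl ⟨i, hi⟩}
        else {Sum.inr (⟨i.val - n₁, hsub i hi⟩, true),
          Sum.inr (⟨(i.val - n₁ + 1) % n₂, hmodlt _⟩, false)} := by
      intro i
      by_cases hi : i.val < n₁
      · simp only [T, dif_pos hi]
        exact singletonSubgraph_verts _ _
      · simp only [T, dif_neg hi]
        exact subgraphOfAdj_verts _ _
    refine ⟨T, ?_, ?_, ?_⟩
    · intro i
      by_cases hi : i.val < n₁
      · rw [show T i = (joinKKstar n₁ n₂).singletonSubgraph (Sum.inl ⟨i.val, hi⟩) from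
          dif_pos hi]
        exact (Subgraph.singletonSubgraph_connected).coe
      · rw [show T i = (joinKKstar n₁ n₂).subgraphOfAdj (key i hi) from dif_neg hi]
        exact (Subgraph.subgraphOfAdj_connected _).coe
    · intro i j hij
      have hij' : i.val ≠ j.val := fun e => hij (Fin.ext e)
      rw [Set.disjoint_left, hverts i, hverts j]
      split_ifs with hi hj hj <;> intro x hx hx'
      · simp only [Set.mem_singleton_iff] at hx hx'
        rw [hx] at hx'
        simp only [Sum.inl.injEq, Fin.mk.injEq] at hx'
        omega
      · simp only [Set.mem_singleton_iff, Set.mem_insert_iff] at hx hx'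
        rcases hx' with hx' | hx' <;> rw [hx] at hx' <;> exact Sum.inl_ne_inr hx'
      · simp only [Set.mem_singleton_iff, Set.mem_insert_iff] at hx hx'
        rcases hx with hx | hx <;> rw [hx'] at hx <;> exact Sum.inl_ne_inr hx
      · simp only [Set.mem_singleton_iff, Set.mem_insert_iff] at hx hx'
        have ha := hsub i hi
        have hb := hsub j hj
        rcases hx with hx | hx <;> rcases hx' with hx' | hx' <;> rw [hx] at hx' <;>
          simp only [Sum.inr.injEq, Prod.mk.injEq, Fin.mk.injEq, and_true, and_false,
            Bool.true_eq_false, Bool.false_eq_true] at hx'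
        · omega
        · rw [succ_mod_eq n₂ _ ha, succ_mod_eq n₂ _ hb] at hx'
          split_ifs at hx' <;> omega
    · intro i j hij
      replace hij : i ≠ j := hij.ne
      have hij' : i.val ≠ j.val := fun e => hij (Fin.ext e)
      by_cases hi : i.val < n₁ <;> by_cases hj : j.val < n₁
      · refine ⟨Sum.inl ⟨i, hi⟩, by rw [hverts]; simp [hi],
          Sum.inl ⟨j, hj⟩, by rw [hverts]; simp [hj], ?_⟩
        rw [joinKKstar_adj]
        simp only [joinAdj, Ne, Fin.mk.injEq]
        omega
      · exact ⟨Sum.inl ⟨i, hi⟩, by rw [hverts]; simp [hi],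
          Sum.inr (⟨j.val - n₁, hsub j hj⟩, true), by rw [hverts]; simp [hj], trivial⟩
      · exact ⟨Sum.inr (⟨i.val - n₁, hsub i hi⟩, true), by rw [hverts]; simp [hi],
          Sum.inl ⟨j, hj⟩, by rw [hverts]; simp [hj], trivial⟩
      · have ha' : i.val - n₁ < n₂ := hsub i hi
        have hb' : j.val - n₁ < n₂ := hsub j hj
        by_cases hc : i.val - n₁ = (j.val - n₁ + 1) % n₂
        · have hc' : j.val - n₁ ≠ (i.val - n₁ + 1) % n₂ := by
            rw [succ_mod_eq n₂ _ ha']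
            rw [succ_mod_eq n₂ _ hb'] at hc
            split_ifs with h1 <;> split_ifs at hc with h2 <;> omega
          refine ⟨Sum.inr (⟨(i.val - n₁ + 1) % n₂, hmodlt _⟩, false),
            by rw [hverts]; simp [hi],
            Sum.inr (⟨j.val - n₁, hb'⟩, true), by rw [hverts]; simp [hj], ?_⟩
          rw [joinKKstar_adj]
          refine ⟨by simp, ?_⟩
          intro e
          rw [Fin.mk.injEq] at e
          exact hc' e.symm
        · refine ⟨Sum.inr (⟨i.val - n₁, ha'⟩, true), by rw [hverts]; simp [hi],
            Sum.inr (⟨(j.val - n₁ + 1) % n₂, hmodlt _⟩, false),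
            by rw [hverts]; simp [hj], ?_⟩
          rw [joinKKstar_adj]
          refine ⟨by simp, ?_⟩
          intro e
          rw [Fin.mk.injEq] at e
          exact hc e
end

section
/- For all positive integers n, k with n ≥ 2k, the Kneser graph K(n,k) contains K_{n−2k+2} as an odd-minor. -/
set_option linter.unusedVariables false

open SimpleGraph

lemma exists_tree_le {V : Type*} [Finite V] :
    ∀ (N : ℕ) (G : SimpleGraph V), G.edgeSet.ncard ≤ N → G.Connected →
      ∃ T : SimpleGraph V, T ≤ G ∧ T.IsTree := by
  intro N
  induction N with
  | zero =>
    intro G hcard hG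
    refine ⟨G, le_refl _, hG, ?_⟩
    -- no edges: acyclic
    have he : G.edgeSet = ∅ := by
      have := Set.ncard_eq_zero (s := G.edgeSet) |>.mp (Nat.le_zero.mp hcard)
      · exact this
    intro v c hc
    cases c with
    | nil => exact hc.not_of_nil
    | cons h p => exact absurd (G.mem_edgeSet.mpr h) (by simp [he])
  | succ N ih =>
    intro G hcard hG
    by_cases hac : G.IsAcyclic
    · exact ⟨G, le_refl _, hG, hac⟩
    · rw [isAcyclic_iff_forall_adj_isBridge] at hac
      push_neg at hac
      obtain ⟨v, w, hadj, hnb⟩ := hac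
      rw [isBridge_iff] at hnb
      push_neg at hnb
      have hreach := hnb
      set G' := G \ fromEdgeSet {s(v, w)} with hG'
      have hle : G' ≤ G := sdiff_le
      have hstep : ∀ {x y : V}, G.Walk x y → G'.Reachable x y := by
        intro x y p
        induction p with
        | nil => exact Reachable.refl _
        | @cons x z y h p ihp =>
          refine Reachable.trans ?_ ihp
          by_cases he : s(x, z) = s(v, w)
          · rw [Sym2.eq_iff] at he
            rcases he with ⟨rfl, rfl⟩ | ⟨rfl, rfl⟩
            · exact hreach
            · exact hreach.symm
          · exact Adj.reachable (by rw [hG', sdiff_adj]; exact ⟨h, by simp [he]⟩)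
      have hG'conn : G'.Connected := by
        have hne : Nonempty V := hG.nonempty
        have hpre : G'.Preconnected := by
          intro x y
          obtain ⟨p⟩ := hG.preconnected x y
          exact hstep p
        exact Connected.mk hpre
      have hedge : G'.edgeSet = G.edgeSet \ {s(v, w)} := by
        rw [hG', edgeSet_sdiff, edgeSet_fromEdgeSet, edgeSet_sdiff_sdiff_isDiag]
      have hcard' : G'.edgeSet.ncard ≤ N := by
        have hmem : s(v, w) ∈ G.edgeSet := hadj
        have hfin : G.edgeSet.Finite := Set.toFinite _
        have := Set.ncard_diff_singleton_lt_of_mem hmem hfin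
        rw [← hedge] at this
        omega
      obtain ⟨T, hTle, hT⟩ := ih G' hcard' hG'conn
      exact ⟨T, le_trans hTle hle, hT⟩

lemma subgraph_to_tree {V : Type*} [Finite V] {G : SimpleGraph V} (H : G.Subgraph)
    (hH : H.coe.Connected) :
    ∃ H' : G.Subgraph, H'.verts = H.verts ∧ (∀ u v, H'.Adj u v → H.Adj u v) ∧ H'.coe.IsTree := by
  obtain ⟨T, hTle, hT⟩ := exists_tree_le H.coe.edgeSet.ncard H.coe le_rfl hH
  refine ⟨⟨H.verts, fun u v => ∃ (hu : u ∈ H.verts) (hv : v ∈ H.verts), T.Adj ⟨u, hu⟩ ⟨v, hv⟩,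
      ?_, ?_, ?_⟩, rfl, ?_, ?_⟩
  · rintro u v ⟨hu, hv, h⟩
    exact H.adj_sub (hTle h)
  · rintro u v ⟨hu, hv, h⟩
    exact hu
  · refine ⟨?_⟩
    rintro u v ⟨hu, hv, h⟩
    exact ⟨hv, hu, h.symm⟩
  · rintro u v ⟨hu, hv, h⟩
    exact (hTle h : H.coe.Adj _ _)
  · have : (⟨H.verts, fun u v => ∃ (hu : u ∈ H.verts) (hv : v ∈ H.verts), T.Adj ⟨u, hu⟩ ⟨v, hv⟩,
        fun {u v} ⟨hu, hv, h⟩ => H.adj_sub (hTle h),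
        fun {u v} ⟨hu, hv, h⟩ => hu,
        ⟨fun u v ⟨hu, hv, h⟩ => ⟨hv, hu, h.symm⟩⟩⟩ : G.Subgraph).coe = T := by
      ext ⟨u, hu⟩ ⟨v, hv⟩
      constructor
      · rintro ⟨hu', hv', h⟩
        convert h
      · intro h
        exact ⟨hu, hv, h⟩
    rw [this]
    exact hT

lemma assemble {V : Type*} [Finite V] (G : SimpleGraph V) (m : ℕ)
    (T : Fin m → G.Subgraph) (c : V → Bool)
    (hconn : ∀ i, (T i).coe.Connected)
    (hdisj : ∀ i j, i ≠ j → Disjoint (T i).verts (T j).verts)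
    (hprop : ∀ i, ∀ u v : V, (T i).Adj u v → c u ≠ c v)
    (hlink : ∀ i j, i ≠ j →
      ∃ u ∈ (T i).verts, ∃ v ∈ (T j).verts, G.Adj u v ∧ c u = c v) :
    HasOddCliqueMinor G m := by
  choose T' hv hle htree using fun i => subgraph_to_tree (T i) (hconn i)
  refine ⟨T', c, htree, ?_, ?_, ?_⟩
  · intro i j hij
    rw [hv i, hv j]
    exact hdisj i j hij
  · intro i u v h
    exact hprop i u v (hle i u v h)
  · intro i j hij
    rw [hv i, hv j]
    exact hlink i j (by simpa using hij)

abbrev KV (n k : ℕ) := {s : Finset (Fin n) // s.card = k}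

def Pprop (m n k : ℕ) : Prop :=
  ∃ (T : Fin m → (kneserGraph n k).Subgraph) (c : KV n k → Bool)
    (E : Fin m → Finset (Fin n)) (S : Fin m → KV n k),
    (∀ i, (T i).coe.Connected) ∧
    (∀ i j, i ≠ j → Disjoint (T i).verts (T j).verts) ∧
    (∀ i, ∀ u v, (T i).Adj u v → c u ≠ c v) ∧
    (∀ i j, i ≠ j →
      ∃ u ∈ (T i).verts, ∃ v ∈ (T j).verts, (kneserGraph n k).Adj u v ∧ c u = c v) ∧
    (∀ i, (E i).card = k + 1) ∧
    (∀ i, S i ∈ (T i).verts) ∧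
    (∀ i, Disjoint (E i) (S i).1) ∧
    Function.Injective E

-- nat mod helpers
lemma mod_add_inj {m a b : ℕ} (ha : a < m) (hb : b < m) (c : ℕ)
    (h : (a + c) % m = (b + c) % m) : a = b := by
  have h' : a ≡ b [MOD m] := Nat.ModEq.add_right_cancel' c h
  unfold Nat.ModEq at h'
  rwa [Nat.mod_eq_of_lt ha, Nat.mod_eq_of_lt hb] at h'

lemma mod_add_ne {m a : ℕ} (hm : 3 ≤ m) {c d : ℕ} (hc : c < d) (hd : d - c ≤ 2)
    (h : (a + c) % m = (a + d) % m) : False := by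
  have h' : a + c ≡ a + d [MOD m] := h
  have h2 : c ≡ d [MOD m] := Nat.ModEq.add_left_cancel' a h'
  have hdvd : m ∣ d - c := (Nat.modEq_iff_dvd' (le_of_lt hc)).mp h2
  have := Nat.le_of_dvd (by omega) hdvd
  omega

lemma mod_swap_false {m a b : ℕ} (hm : 3 ≤ m)
    (h1 : (a + 1) % m = (b + 2) % m) (h2 : (a + 2) % m = (b + 1) % m) : False := by
  have h1' : a + 1 ≡ b + 2 [MOD m] := h1
  have h2' : b + 1 ≡ a + 2 [MOD m] := h2.symm
  have h3 := h1'.add h2'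
  have e1 : (a + 1) + (b + 1) = (a + b) + 2 := by ring
  have e2 : (b + 2) + (a + 2) = (a + b) + 4 := by ring
  rw [e1, e2] at h3
  have h4 : 2 ≡ 4 [MOD m] := Nat.ModEq.add_left_cancel' (a + b) h3
  have hdvd : m ∣ 4 - 2 := (Nat.modEq_iff_dvd' (by norm_num)).mp h4
  have := Nat.le_of_dvd (by norm_num) hdvd
  omega

lemma base_case (m : ℕ) (hm : 3 ≤ m) : Pprop m m 1 := by
  have hm0 : 0 < m := by omega
  set G := kneserGraph m 1 with hG
  -- vertices
  have hcard : ∀ i : Fin m, ({i} : Finset (Fin m)).card = 1 := fun i => Finset.card_singleton i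
  set vert : Fin m → KV m 1 := fun i => ⟨{i}, hcard i⟩ with hvert
  have vert_inj : Function.Injective vert := by
    intro i j h
    have := congrArg (fun s => s.1) h
    simpa [hvert] using this
  set e1 : Fin m → Fin m := fun i => ⟨(i.val + 1) % m, Nat.mod_lt _ hm0⟩ with he1
  set e2 : Fin m → Fin m := fun i => ⟨(i.val + 2) % m, Nat.mod_lt _ hm0⟩ with he2
  have he12 : ∀ i, e1 i ≠ e2 i := by
    intro i h
    exact mod_add_ne hm (c := 1) (d := 2) (by norm_num) (by norm_num)
      (congrArg Fin.val h)
  refine ⟨fun i => G.singletonSubgraph (vert i), fun _ => true,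
    fun i => {e1 i, e2 i}, vert, ?_, ?_, ?_, ?_, ?_, ?_, ?_, ?_⟩
  · intro i
    exact (Subgraph.singletonSubgraph_connected (G := G) (v := vert i)).coe
  · intro i j hij
    simp only [singletonSubgraph_verts, Set.disjoint_singleton_left, Set.mem_singleton_iff]
    exact fun h => hij (vert_inj h)
  · intro i u v h
    simp [singletonSubgraph_adj] at h
  · intro i j hij
    refine ⟨vert i, by simp, vert j, by simp, (show _ ∧ _ from ⟨fun h => hij (vert_inj h), ?_⟩), rfl⟩
    simp only [hvert, Finset.disjoint_singleton]
    exact fun h => hij (Fin.val_injective (by simpa using congrArg Fin.val h))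
  · intro i
    rw [Finset.card_insert_of_notMem (by simp [he12 i]), Finset.card_singleton]
  · intro i
    simp [singletonSubgraph_verts]
  · intro i
    rw [Finset.disjoint_insert_left, Finset.disjoint_singleton_left]
    constructor
    · intro hmem
      rw [Finset.mem_singleton] at hmem
      have hv : (i.val + 1) % m = i.val := by simpa using congrArg Fin.val hmem
      refine mod_add_ne (a := i.val) hm (c := 0) (d := 1) (by norm_num) (by norm_num) ?_
      rw [Nat.add_zero, Nat.mod_eq_of_lt i.isLt]
      exact hv.symm
    · intro hmem
      have hmem' : e2 i = i := by simpa [hvert] using hmem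
      have hv : (i.val + 2) % m = i.val := by simpa using congrArg Fin.val hmem'
      refine mod_add_ne (a := i.val) hm (c := 0) (d := 2) (by norm_num) (by norm_num) ?_
      rw [Nat.add_zero, Nat.mod_eq_of_lt i.isLt]
      exact hv.symm
  · intro i j hEij
    by_contra hij
    dsimp only at hEij
    have h1 : e1 i ∈ ({e1 j, e2 j} : Finset (Fin m)) := by
      rw [← hEij]; simp
    have h2 : e2 i ∈ ({e1 j, e2 j} : Finset (Fin m)) := by
      rw [← hEij]; simp
    rw [Finset.mem_insert, Finset.mem_singleton] at h1 h2
    rcases h1 with h1 | h1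
    · exact hij (Fin.val_injective (mod_add_inj i.isLt j.isLt 1 (congrArg Fin.val h1)))
    · rcases h2 with h2 | h2
      · exact mod_swap_false hm (congrArg Fin.val h1) (congrArg Fin.val h2)
      · have : i = j := Fin.val_injective (mod_add_inj i.isLt j.isLt 2 (congrArg Fin.val h2))
        exact hij this

lemma step_case (m n k : ℕ) (h : Pprop m n k) : Pprop m (n + 2) (k + 1) := by
  classical
  obtain ⟨T, c, E, S, hconn, hdisj, hprop, hlink, hEcard, hSmem, hESdisj, hEinj⟩ := h
  set G' := kneserGraph (n + 2) (k + 1) with hG'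
  let ι : Fin n ↪ Fin (n + 2) := ⟨Fin.castLE (by omega), Fin.castLE_injective _⟩
  let ιF : Finset (Fin n) → Finset (Fin (n + 2)) := fun s => s.map ι
  have ιF_inj : Function.Injective ιF := fun s t h => Finset.map_injective ι h
  have ιF_val : ∀ (s : Finset (Fin n)) (x : Fin (n+2)), x ∈ ιF s → x.val < n := by
    intro s x hx
    rw [Finset.mem_map] at hx
    obtain ⟨y, _, rfl⟩ := hx
    exact y.isLt
  let a : Fin (n + 2) := ⟨n, by omega⟩
  let b : Fin (n + 2) := ⟨n + 1, by omega⟩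
  have hab : a ≠ b := by
    intro h
    have := congrArg Fin.val h
    simp [a, b] at this
  have ha_not : ∀ s : Finset (Fin n), a ∉ ιF s := by
    intro s hmem
    have := ιF_val s a hmem
    simp [a] at this
  have hb_not : ∀ s : Finset (Fin n), b ∉ ιF s := by
    intro s hmem
    have := ιF_val s b hmem
    simp [b] at this
  have card_ιF : ∀ s : Finset (Fin n), (ιF s).card = s.card := fun s => Finset.card_map _
  have disj_ιF : ∀ {s t : Finset (Fin n)}, Disjoint s t → Disjoint (ιF s) (ιF t) :=
    fun {s t} h => (Finset.disjoint_map ι).mpr h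
  -- image vertices
  let imA : KV n k → KV (n + 2) (k + 1) := fun v =>
    ⟨insert a (ιF v.1), by rw [Finset.card_insert_of_notMem (ha_not _), card_ιF, v.2]⟩
  let imB : KV n k → KV (n + 2) (k + 1) := fun v =>
    ⟨insert b (ιF v.1), by rw [Finset.card_insert_of_notMem (hb_not _), card_ιF, v.2]⟩
  have imA_inj : Function.Injective imA := by
    intro u v h
    have h1 : insert a (ιF u.1) = insert a (ιF v.1) := congrArg Subtype.val h
    have h2 : ιF u.1 = ιF v.1 := by
      rw [← Finset.erase_insert (ha_not u.1), ← Finset.erase_insert (ha_not v.1), h1]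
    exact Subtype.ext (ιF_inj h2)
  have imB_inj : Function.Injective imB := by
    intro u v h
    have h1 : insert b (ιF u.1) = insert b (ιF v.1) := congrArg Subtype.val h
    have h2 : ιF u.1 = ιF v.1 := by
      rw [← Finset.erase_insert (hb_not u.1), ← Finset.erase_insert (hb_not v.1), h1]
    exact Subtype.ext (ιF_inj h2)
  have imA_ne_imB : ∀ u v, imA u ≠ imB v := by
    intro u v h
    have hb1 : b ∈ (imB v).1 := Finset.mem_insert_self _ _
    rw [← h] at hb1
    rcases Finset.mem_insert.mp hb1 with h' | h'
    · exact hab h'.symm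
    · exact hb_not u.1 h'
  let conn : Fin m → KV (n + 2) (k + 1) := fun i => ⟨ιF (E i), by rw [card_ιF, hEcard]⟩
  have conn_ne_imA : ∀ i v, conn i ≠ imA v := by
    intro i v h
    have ha1 : a ∈ (imA v).1 := Finset.mem_insert_self _ _
    rw [← h] at ha1
    exact ha_not _ ha1
  have conn_ne_imB : ∀ i v, conn i ≠ imB v := by
    intro i v h
    have hb1 : b ∈ (imB v).1 := Finset.mem_insert_self _ _
    rw [← h] at hb1
    exact hb_not _ hb1
  have conn_inj : Function.Injective conn := by
    intro i j h
    exact hEinj (ιF_inj (congrArg Subtype.val h))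
  -- adjacency helpers
  have kneser_ne : ∀ {u v : KV (n + 2) (k + 1)}, Disjoint u.1 v.1 → u ≠ v := by
    intro u v hd he
    rw [he] at hd
    have hv : v.1 = ∅ := (Finset.disjoint_self_iff_empty _).mp hd
    have hc := v.2
    rw [hv] at hc
    simp at hc
  have adjAB : ∀ {u v : KV n k}, Disjoint u.1 v.1 → G'.Adj (imA u) (imB v) := by
    intro u v hd
    have hdisj2 : Disjoint (imA u).1 (imB v).1 := by
      rw [Finset.disjoint_left]
      intro x hx hx'
      rcases Finset.mem_insert.mp hx with rfl | hx
      · rcases Finset.mem_insert.mp hx' with h' | h'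
        · exact hab h'
        · exact ha_not _ h'
      · rcases Finset.mem_insert.mp hx' with rfl | h'
        · exact hb_not _ hx
        · exact Finset.disjoint_left.mp (disj_ιF hd) hx h'
    exact (show _ ∧ _ from ⟨kneser_ne hdisj2, hdisj2⟩)
  have adjConnA : ∀ i, G'.Adj (conn i) (imA (S i)) := by
    intro i
    have hdisj2 : Disjoint (conn i).1 (imA (S i)).1 := by
      rw [Finset.disjoint_left]
      intro x hx hx'
      rcases Finset.mem_insert.mp hx' with rfl | h'
      · exact ha_not _ hx
      · exact Finset.disjoint_left.mp (disj_ιF (hESdisj i)) hx h'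
    exact (show _ ∧ _ from ⟨kneser_ne hdisj2, hdisj2⟩)
  have adjConnB : ∀ i, G'.Adj (conn i) (imB (S i)) := by
    intro i
    have hdisj2 : Disjoint (conn i).1 (imB (S i)).1 := by
      rw [Finset.disjoint_left]
      intro x hx hx'
      rcases Finset.mem_insert.mp hx' with rfl | h'
      · exact hb_not _ hx
      · exact Finset.disjoint_left.mp (disj_ιF (hESdisj i)) hx h'
    exact (show _ ∧ _ from ⟨kneser_ne hdisj2, hdisj2⟩)
  -- the new subgraphs
  let T' : Fin m → G'.Subgraph := fun i =>
    { verts := (imA '' (T i).verts) ∪ (imB '' (T i).verts) ∪ {conn i}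
      Adj := fun u v =>
        (∃ x y, (T i).Adj x y ∧ ((u = imA x ∧ v = imB y) ∨ (u = imB x ∧ v = imA y)))
        ∨ (u = conn i ∧ (v = imA (S i) ∨ v = imB (S i)))
        ∨ (v = conn i ∧ (u = imA (S i) ∨ u = imB (S i)))
      adj_sub := by
        rintro u v (⟨x, y, hxy, (⟨rfl, rfl⟩ | ⟨rfl, rfl⟩)⟩ | ⟨rfl, (rfl | rfl)⟩ |
          ⟨rfl, (rfl | rfl)⟩)
        · exact adjAB (show _ ∧ _ from (T _).adj_sub hxy).2
        · exact (adjAB (show _ ∧ _ from (T _).adj_sub hxy.symm).2).symm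
        · exact adjConnA _
        · exact adjConnB _
        · exact (adjConnA _).symm
        · exact (adjConnB _).symm
      edge_vert := by
        rintro u v (⟨x, y, hxy, (⟨rfl, _⟩ | ⟨rfl, _⟩)⟩ | ⟨rfl, _⟩ | ⟨_, (rfl | rfl)⟩)
        · exact Or.inl (Or.inl ⟨x, (T _).edge_vert hxy, rfl⟩)
        · exact Or.inl (Or.inr ⟨x, (T _).edge_vert hxy, rfl⟩)
        · exact Or.inr rfl
        · exact Or.inl (Or.inl ⟨S _, hSmem _, rfl⟩)
        · exact Or.inl (Or.inr ⟨S _, hSmem _, rfl⟩)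
      symm := by
        refine ⟨?_⟩
        rintro u v (⟨x, y, hxy, (⟨hu, hv⟩ | ⟨hu, hv⟩)⟩ | h | h)
        · exact Or.inl ⟨y, x, hxy.symm, Or.inr ⟨hv, hu⟩⟩
        · exact Or.inl ⟨y, x, hxy.symm, Or.inl ⟨hv, hu⟩⟩
        · exact Or.inr (Or.inr h)
        · exact Or.inr (Or.inl h) }
  have T'_verts : ∀ i, (T' i).verts = (imA '' (T i).verts) ∪ (imB '' (T i).verts) ∪ {conn i} :=
    fun i => rfl
  have T'_adj : ∀ i u v, (T' i).Adj u v ↔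
      ((∃ x y, (T i).Adj x y ∧ ((u = imA x ∧ v = imB y) ∨ (u = imB x ∧ v = imA y)))
        ∨ (u = conn i ∧ (v = imA (S i) ∨ v = imB (S i)))
        ∨ (v = conn i ∧ (u = imA (S i) ∨ u = imB (S i)))) := fun i u v => Iff.rfl
  -- the coloring
  let c' : KV (n + 2) (k + 1) → Bool := fun u =>
    if h : ∃ v : KV n k, u = imA v then c h.choose
    else if h2 : ∃ v : KV n k, u = imB v then c h2.choose
    else if h3 : ∃ i : Fin m, u = conn i then !(c (S h3.choose))
    else true
  have c'A : ∀ v, c' (imA v) = c v := by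
    intro v
    have h : ∃ w, imA v = imA w := ⟨v, rfl⟩
    simp only [c']
    rw [dif_pos h]
    have hv : h.choose = v := imA_inj h.choose_spec.symm
    rw [hv]
  have c'B : ∀ v, c' (imB v) = c v := by
    intro v
    have h1 : ¬∃ w, imB v = imA w := by
      rintro ⟨w, hw⟩
      exact imA_ne_imB w v hw.symm
    have h : ∃ w, imB v = imB w := ⟨v, rfl⟩
    simp only [c']
    rw [dif_neg h1, dif_pos h]
    have hv : h.choose = v := imB_inj h.choose_spec.symm
    rw [hv]
  have c'C : ∀ i, c' (conn i) = !(c (S i)) := by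
    intro i
    have h1 : ¬∃ w, conn i = imA w := by
      rintro ⟨w, hw⟩
      exact conn_ne_imA i w hw
    have h2 : ¬∃ w, conn i = imB w := by
      rintro ⟨w, hw⟩
      exact conn_ne_imB i w hw
    have h : ∃ j, conn i = conn j := ⟨i, rfl⟩
    simp only [c']
    rw [dif_neg h1, dif_neg h2, dif_pos h]
    have hv : h.choose = i := conn_inj h.choose_spec.symm
    rw [hv]
  -- connectivity
  have hconn' : ∀ i, (T' i).coe.Connected := by
    intro i
    have memC : conn i ∈ (T' i).verts := Or.inr rfl
    have memA : ∀ {v}, v ∈ (T i).verts → imA v ∈ (T' i).verts :=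
      fun hv => Or.inl (Or.inl ⟨_, hv, rfl⟩)
    have memB : ∀ {v}, v ∈ (T i).verts → imB v ∈ (T' i).verts :=
      fun hv => Or.inl (Or.inr ⟨_, hv, rfl⟩)
    let cv : ↥(T' i).verts := ⟨conn i, memC⟩
    have key : ∀ (x y : ↥(T i).verts) (w : (T i).coe.Walk x y),
        ((T' i).coe.Reachable cv ⟨imA x.1, memA x.2⟩ ∧
          (T' i).coe.Reachable cv ⟨imB x.1, memB x.2⟩) →
        ((T' i).coe.Reachable cv ⟨imA y.1, memA y.2⟩ ∧
          (T' i).coe.Reachable cv ⟨imB y.1, memB y.2⟩) := by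
      intro x y w
      induction w with
      | nil => exact id
      | @cons x z y h p ih =>
        intro hx
        apply ih
        have hadj : (T i).Adj x.1 z.1 := h
        constructor
        · refine hx.2.trans (Adj.reachable ?_)
          show (T' i).coe.Adj ⟨imB x.1, memB x.2⟩ ⟨imA z.1, memA z.2⟩
          rw [Subgraph.coe_adj]
          exact Or.inl ⟨x.1, z.1, hadj, Or.inr ⟨rfl, rfl⟩⟩
        · refine hx.1.trans (Adj.reachable ?_)
          show (T' i).coe.Adj ⟨imA x.1, memA x.2⟩ ⟨imB z.1, memB z.2⟩
          rw [Subgraph.coe_adj]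
          exact Or.inl ⟨x.1, z.1, hadj, Or.inl ⟨rfl, rfl⟩⟩
    have base : (T' i).coe.Reachable cv ⟨imA (S i), memA (hSmem i)⟩ ∧
        (T' i).coe.Reachable cv ⟨imB (S i), memB (hSmem i)⟩ := by
      constructor
      · refine Adj.reachable ?_
        show (T' i).coe.Adj cv ⟨imA (S i), memA (hSmem i)⟩
        rw [Subgraph.coe_adj]
        exact Or.inr (Or.inl ⟨rfl, Or.inl rfl⟩)
      · refine Adj.reachable ?_
        show (T' i).coe.Adj cv ⟨imB (S i), memB (hSmem i)⟩
        rw [Subgraph.coe_adj]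
        exact Or.inr (Or.inl ⟨rfl, Or.inr rfl⟩)
    have all : ∀ u : ↥(T' i).verts, (T' i).coe.Reachable cv u := by
      rintro ⟨u, hu⟩
      rcases hu with (⟨v, hv, rfl⟩ | ⟨v, hv, rfl⟩) | rfl
      · obtain ⟨w⟩ := (hconn i).preconnected ⟨S i, hSmem i⟩ ⟨v, hv⟩
        exact (key _ _ w base).1
      · obtain ⟨w⟩ := (hconn i).preconnected ⟨S i, hSmem i⟩ ⟨v, hv⟩
        exact (key _ _ w base).2
      · exact Reachable.refl _
    haveI : Nonempty ↥(T' i).verts := ⟨cv⟩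
    exact Connected.mk (fun u v => (all u).symm.trans (all v))
  -- final data
  let E' : Fin m → Finset (Fin (n + 2)) := fun i => insert a (insert b (ιF (S i).1))
  have hb_ins : ∀ i, b ∉ ιF (S i).1 := fun i => hb_not _
  have ha_ins : ∀ i, a ∉ insert b (ιF (S i).1) := by
    intro i hmem
    rcases Finset.mem_insert.mp hmem with h' | h'
    · exact hab h'
    · exact ha_not _ h'
  refine ⟨T', c', E', fun i => conn i, hconn', ?_, ?_, ?_, ?_, ?_, ?_, ?_⟩
  · -- disjoint verts
    intro i j hij
    rw [Set.disjoint_left]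
    rintro u ((⟨v, hv, rfl⟩ | ⟨v, hv, rfl⟩) | rfl) ((⟨w, hw, hu⟩ | ⟨w, hw, hu⟩) | hu)
    · exact Set.disjoint_left.mp (hdisj i j hij) hv (imA_inj hu.symm ▸ hw)
    · exact imA_ne_imB v w hu.symm
    · exact conn_ne_imA j v hu.symm
    · exact imA_ne_imB w v hu
    · exact Set.disjoint_left.mp (hdisj i j hij) hv (imB_inj hu.symm ▸ hw)
    · exact conn_ne_imB j v hu.symm
    · exact conn_ne_imA i w hu.symm
    · exact conn_ne_imB i w hu.symm
    · exact hij (conn_inj hu)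
  · -- proper
    rintro i u v (⟨x, y, hxy, (⟨rfl, rfl⟩ | ⟨rfl, rfl⟩)⟩ | ⟨rfl, (rfl | rfl)⟩ |
      ⟨rfl, (rfl | rfl)⟩)
    · rw [c'A, c'B]; exact hprop i x y hxy
    · rw [c'B, c'A]; exact hprop i x y hxy
    · rw [c'C, c'A]; simp
    · rw [c'C, c'B]; simp
    · rw [c'A, c'C]; simp
    · rw [c'B, c'C]; simp
  · -- links
    intro i j hij
    obtain ⟨u, hu, v, hv, huv, hcuv⟩ := hlink i j hij
    refine ⟨imA u, Or.inl (Or.inl ⟨u, hu, rfl⟩), imB v, Or.inl (Or.inr ⟨v, hv, rfl⟩),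
      adjAB (show _ ∧ _ from huv).2, ?_⟩
    rw [c'A, c'B]; exact hcuv
  · -- card
    intro i
    show (insert a (insert b (ιF (S i).1))).card = k + 1 + 1
    rw [Finset.card_insert_of_notMem (ha_ins i), Finset.card_insert_of_notMem (hb_ins i),
      card_ιF, (S i).2]
  · -- mem
    intro i
    exact Or.inr rfl
  · -- disjoint E' (conn i)
    intro i
    show Disjoint (insert a (insert b (ιF (S i).1))) (ιF (E i))
    rw [Finset.disjoint_left]
    intro x hx hx'
    rcases Finset.mem_insert.mp hx with rfl | hx
    · exact ha_not _ hx'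
    · rcases Finset.mem_insert.mp hx with rfl | hx
      · exact hb_not _ hx'
      · exact Finset.disjoint_left.mp (disj_ιF (hESdisj i).symm) hx hx'
  · -- injective E'
    intro i j hij
    by_contra hne
    have h1 : insert a (insert b (ιF (S i).1)) = insert a (insert b (ιF (S j).1)) := hij
    have h2 : insert b (ιF (S i).1) = insert b (ιF (S j).1) := by
      rw [← Finset.erase_insert (ha_ins i), ← Finset.erase_insert (ha_ins j), h1]
    have h3 : ιF (S i).1 = ιF (S j).1 := by
      rw [← Finset.erase_insert (hb_ins i), ← Finset.erase_insert (hb_ins j), h2]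
    have h4 : S i = S j := Subtype.ext (ιF_inj h3)
    exact Set.disjoint_left.mp (hdisj i j hne) (hSmem i) (h4 ▸ hSmem j)

lemma two_case (k : ℕ) (hk : 0 < k) : HasOddCliqueMinor (kneserGraph (2 * k) k) 2 := by
  classical
  set G := kneserGraph (2 * k) k with hG
  let eA : Fin k ↪ Fin (2 * k) := ⟨fun i => ⟨i.val, by omega⟩, by
    intro x y hxy
    have := congrArg Fin.val hxy
    simp only at this
    exact Fin.val_injective this⟩
  let eB : Fin k ↪ Fin (2 * k) := ⟨fun i => ⟨k + i.val, by omega⟩, by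
    intro x y hxy
    have := congrArg Fin.val hxy
    simp only at this
    exact Fin.val_injective (by omega)⟩
  let A : Finset (Fin (2 * k)) := Finset.univ.map eA
  let B : Finset (Fin (2 * k)) := Finset.univ.map eB
  have hAcard : A.card = k := by simp [A]
  have hBcard : B.card = k := by simp [B]
  have hABdisj : Disjoint A B := by
    rw [Finset.disjoint_left]
    intro x hx hx'
    rw [Finset.mem_map] at hx hx'
    obtain ⟨y, _, rfl⟩ := hx
    obtain ⟨z, _, hz⟩ := hx'
    have := congrArg Fin.val hz
    simp only [eA, eB, Function.Embedding.coeFn_mk] at this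
    have h' : k + z.val = y.val := congrArg Fin.val hz
    have := y.isLt
    omega
  let vA : {s : Finset (Fin (2 * k)) // s.card = k} := ⟨A, hAcard⟩
  let vB : {s : Finset (Fin (2 * k)) // s.card = k} := ⟨B, hBcard⟩
  have hAB : vA ≠ vB := by
    intro h
    have h1 : A = B := congrArg Subtype.val h
    rw [h1] at hABdisj
    have : B = ∅ := (Finset.disjoint_self_iff_empty _).mp hABdisj
    rw [this] at hBcard
    simp at hBcard
    omega
  have hadj : G.Adj vA vB := (show _ ∧ _ from ⟨hAB, hABdisj⟩)
  refine assemble G 2 (fun i => if i = 0 then G.singletonSubgraph vA else G.singletonSubgraph vB)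
    (fun _ => true) ?_ ?_ ?_ ?_
  · intro i
    by_cases h : i = 0
    · rw [if_pos h]
      exact (Subgraph.singletonSubgraph_connected (G := G) (v := vA)).coe
    · rw [if_neg h]
      exact (Subgraph.singletonSubgraph_connected (G := G) (v := vB)).coe
  · intro i j hij
    by_cases hi : i = 0 <;> by_cases hj : j = 0
    · exact absurd (hi.trans hj.symm) hij
    · rw [if_pos hi, if_neg hj, singletonSubgraph_verts, singletonSubgraph_verts,
        Set.disjoint_singleton_left, Set.mem_singleton_iff]
      exact hAB
    · rw [if_neg hi, if_pos hj, singletonSubgraph_verts, singletonSubgraph_verts,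
        Set.disjoint_singleton_left, Set.mem_singleton_iff]
      exact fun h => hAB h.symm
    · exfalso
      apply hij
      have h1 : i.val ≠ 0 := fun h => hi (Fin.ext (by simpa using h))
      have h2 : j.val ≠ 0 := fun h => hj (Fin.ext (by simpa using h))
      have h3 := i.isLt
      have h4 := j.isLt
      exact Fin.val_injective (by omega)
  · intro i u v h
    by_cases hi : i = 0
    · rw [if_pos hi] at h
      simp [singletonSubgraph_adj] at h
    · rw [if_neg hi] at h
      simp [singletonSubgraph_adj] at h
  · intro i j hij
    by_cases hi : i = 0 <;> by_cases hj : j = 0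
    · exact absurd (hi.trans hj.symm) hij
    · rw [if_pos hi, if_neg hj]
      exact ⟨vA, by simp, vB, by simp, hadj, rfl⟩
    · rw [if_neg hi, if_pos hj]
      exact ⟨vB, by simp, vA, by simp, hadj.symm, rfl⟩
    · exfalso
      apply hij
      have h1 : i.val ≠ 0 := fun h => hi (Fin.ext (by simpa using h))
      have h2 : j.val ≠ 0 := fun h => hj (Fin.ext (by simpa using h))
      have h3 := i.isLt
      have h4 := j.isLt
      exact Fin.val_injective (by omega)

lemma keyP (m : ℕ) (hm : 3 ≤ m) : ∀ j : ℕ, Pprop m (m + 2 * j) (j + 1) := by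
  intro j
  induction j with
  | zero => simpa using base_case m hm
  | succ j ih =>
    have he : m + 2 * (j + 1) = (m + 2 * j) + 2 := by ring
    rw [he]
    exact step_case m (m + 2 * j) (j + 1) ih

/-- For all positive integers `n, k` with `n ≥ 2k`, the Kneser graph `K(n,k)`
contains `K_{n-2k+2}` as an odd-minor. -/
theorem stmt11 (n k : ℕ) (hk : 0 < k) (h : 2 * k ≤ n) :
    HasOddCliqueMinor (kneserGraph n k) (n - 2 * k + 2) := by
  rcases eq_or_lt_of_le h with heq | hlt
  · have hn : n = 2 * k := heq.symm
    subst hn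
    have h2 : 2 * k - 2 * k + 2 = 2 := by omega
    rw [h2]
    exact two_case k hk
  · generalize hgoal : n - 2 * k + 2 = m
    have hm : 3 ≤ m := by omega
    obtain ⟨j, rfl⟩ : ∃ j, k = j + 1 := ⟨k - 1, by omega⟩
    have hn : n = m + 2 * j := by omega
    subst hn
    obtain ⟨T, c, E, S, hconn, hdisj, hprop, hlink, _, _, _, _⟩ := keyP m hm j
    exact assemble _ m T c hconn hdisj hprop hlink
end

section
/- Every cyclically stable (k−1)-subset of [2k−1] other than {2,4,...,2k−2} contains exactly one of the elements 1 and 2k−1. -/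
set_option linter.unusedVariables false

open SimpleGraph

/-- Every cyclically stable `(k-1)`-subset of `[2k-1]` other than `{2,4,…,2k-2}`
contains exactly one of the elements `1` and `2k-1`. (Here `[2k-1]` is modelled as
`Fin (2k-1)` with element `m` of `[2k-1]` corresponding to index `m - 1`; the set
`{2,4,…,2k-2}` corresponds to the indices of odd value.) -/
theorem stmt13 (k : ℕ) (hk : 2 ≤ k) (s : Finset (Fin (2 * k - 1)))
    (hcard : s.card = k - 1) (hstab : CycStable s)
    (hne : s ≠ Finset.univ.filter (fun i : Fin (2 * k - 1) => i.val % 2 = 1)) :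
    Xor' ((⟨0, by omega⟩ : Fin (2 * k - 1)) ∈ s)
      ((⟨2 * k - 2, by omega⟩ : Fin (2 * k - 1)) ∈ s) := by

  have hn : 2 * k - 2 < 2 * k - 1 := by omega
  have hnotboth : ¬ (((⟨0, by omega⟩ : Fin (2 * k - 1)) ∈ s) ∧
      ((⟨2 * k - 2, by omega⟩ : Fin (2 * k - 1)) ∈ s)) := by
    rintro ⟨h0, h1⟩
    have := hstab ⟨2 * k - 2, by omega⟩ h1 ⟨0, by omega⟩ h0
    simp only [] at this
    have h2 : 2 * k - 2 + 1 = 2 * k - 1 := by omega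
    rw [h2, Nat.mod_self] at this
    exact this rfl
  by_cases h0 : ((⟨0, by omega⟩ : Fin (2 * k - 1)) ∈ s)
  · exact Or.inl ⟨h0, fun h1 => hnotboth ⟨h0, h1⟩⟩
  by_cases h1 : ((⟨2 * k - 2, by omega⟩ : Fin (2 * k - 1)) ∈ s)
  · exact Or.inr ⟨h1, h0⟩
  -- Neither endpoint: derive s = odd set, contradiction
  exfalso
  have hbnd : ∀ a ∈ s, 1 ≤ a.val ∧ a.val ≤ 2 * k - 3 := by
    intro a ha
    have hlt := a.isLt
    constructor
    · by_contra h
      have : a = (⟨0, by omega⟩ : Fin (2 * k - 1)) := Fin.ext (show a.val = 0 by omega)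
      exact h0 (this ▸ ha)
    · by_contra h
      have : a = (⟨2 * k - 2, by omega⟩ : Fin (2 * k - 1)) := Fin.ext (show a.val = 2 * k - 2 by omega)
      exact h1 (this ▸ ha)
  have hinj : Set.InjOn (fun a : Fin (2 * k - 1) => (a.val - 1) / 2) ↑s := by
    intro a ha b hb hab
    simp only [] at hab
    obtain ⟨ha1, ha2⟩ := hbnd a ha
    obtain ⟨hb1, hb2⟩ := hbnd b hb
    have hcase : a.val = b.val ∨ a.val = b.val + 1 ∨ b.val = a.val + 1 := by omega
    rcases hcase with h | h | h
    · exact Fin.ext h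
    · exfalso
      have := hstab b hb a ha
      rw [Nat.mod_eq_of_lt (by omega)] at this
      exact this h
    · exfalso
      have := hstab a ha b hb
      rw [Nat.mod_eq_of_lt (by omega)] at this
      exact this h
  have hsubr : s.image (fun a : Fin (2 * k - 1) => (a.val - 1) / 2) ⊆ Finset.range (k - 1) := by
    intro m hm
    simp only [Finset.mem_image] at hm
    obtain ⟨a, ha, rfl⟩ := hm
    obtain ⟨ha1, ha2⟩ := hbnd a ha
    simp only [Finset.mem_range]
    omega
  have hcardim : (s.image (fun a : Fin (2 * k - 1) => (a.val - 1) / 2)).card = k - 1 := by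
    rw [Finset.card_image_of_injOn hinj, hcard]
  have heqr : s.image (fun a : Fin (2 * k - 1) => (a.val - 1) / 2) = Finset.range (k - 1) :=
    Finset.eq_of_subset_of_card_le hsubr (by rw [hcardim, Finset.card_range])
  have hmem : ∀ m < k - 1, ∃ a ∈ s, a.val = 2 * m + 1 ∨ a.val = 2 * m + 2 := by
    intro m hm
    have : m ∈ s.image (fun a : Fin (2 * k - 1) => (a.val - 1) / 2) := by
      rw [heqr]; exact Finset.mem_range.mpr hm
    simp only [Finset.mem_image] at this
    obtain ⟨a, ha, hav⟩ := this
    obtain ⟨ha1, ha2⟩ := hbnd a ha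
    exact ⟨a, ha, by omega⟩
  have key : ∀ j, j ≤ k - 2 → ∃ a ∈ s, a.val = 2 * k - 3 - 2 * j := by
    intro j
    induction j with
    | zero =>
      intro _
      obtain ⟨a, ha, hav⟩ := hmem (k - 2) (by omega)
      refine ⟨a, ha, ?_⟩
      rcases hav with h | h
      · omega
      · exfalso
        have : a = (⟨2 * k - 2, by omega⟩ : Fin (2 * k - 1)) := Fin.ext (show a.val = 2 * k - 2 by omega)
        exact h1 (this ▸ ha)
    | succ j ih =>
      intro hj
      obtain ⟨b, hb, hbv⟩ := ih (by omega)
      obtain ⟨a, ha, hav⟩ := hmem (k - 2 - (j + 1)) (by omega)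
      refine ⟨a, ha, ?_⟩
      rcases hav with h | h
      · omega
      · exfalso
        have hst := hstab a ha b hb
        rw [Nat.mod_eq_of_lt (by omega)] at hst
        exact hst (by omega)
  have hsub : Finset.univ.filter (fun i : Fin (2 * k - 1) => i.val % 2 = 1) ⊆ s := by
    intro i hi
    simp only [Finset.mem_filter, Finset.mem_univ, true_and] at hi
    have hlt := i.isLt
    obtain ⟨a, ha, hav⟩ := key ((2 * k - 3 - i.val) / 2) (by omega)
    have : a = i := Fin.ext (by omega)
    exact this ▸ ha
  have hcardge : k - 1 ≤ (Finset.univ.filter (fun i : Fin (2 * k - 1) => i.val % 2 = 1)).card := by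
    have := Finset.card_le_card_of_injOn
      (f := fun m : Fin (k - 1) => (⟨2 * m.val + 1, by have := m.isLt; omega⟩ : Fin (2 * k - 1)))
      (s := (Finset.univ : Finset (Fin (k - 1))))
      (t := Finset.univ.filter (fun i : Fin (2 * k - 1) => i.val % 2 = 1))
      ?_ ?_
    · rwa [Finset.card_univ, Fintype.card_fin] at this
    · intro m hm
      simp only [Finset.mem_coe, Finset.mem_filter, Finset.mem_univ, true_and]
      omega
    · intro m hm m' hm' h
      simp only [Fin.mk.injEq] at h
      exact Fin.ext (by omega)
  exact hne (Finset.eq_of_subset_of_card_le hsub (by omega)).symm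
end

section
/- The fractional chromatic number of the Kneser graph K(n,k) equals n/k, for n ≥ 2k ≥ 2. -/
set_option linter.unusedVariables false

open SimpleGraph

/-- The fractional chromatic number, via the LP over fractional covers by independent sets. -/
noncomputable def fracChrom {V : Type*} [Fintype V] [DecidableEq V] (G : SimpleGraph V) : ℝ :=
  sInf { q : ℝ | ∃ w : Finset V → ℝ, (∀ s, 0 ≤ w s) ∧
    (∀ s, w s ≠ 0 → ∀ u ∈ s, ∀ v ∈ s, ¬ G.Adj u v) ∧
    (∀ v : V, 1 ≤ ∑ s ∈ Finset.univ.filter (fun s : Finset V => v ∈ s), w s) ∧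
    (∑ s, w s = q) }

section Aux

variable {n k : ℕ}

/-- The star independent sets in the Kneser graph. -/
private def star (n k : ℕ) (i : Fin n) : Finset {s : Finset (Fin n) // s.card = k} :=
  Finset.univ.filter (fun s => i ∈ s.1)

private lemma mem_star {i : Fin n} {v : {s : Finset (Fin n) // s.card = k}} :
    v ∈ star n k i ↔ i ∈ v.1 := by
  unfold _root_.star; simp

end Aux

/-- The fractional chromatic number of the Kneser graph `K(n,k)` equals `n/k`,
for `n ≥ 2k ≥ 2`. -/
theorem stmt14 (n k : ℕ) (hk : 1 ≤ k) (h : 2 * k ≤ n) :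
    fracChrom (kneserGraph n k) = (n : ℝ) / (k : ℝ) := by
  classical
  have hk0 : (0:ℝ) < (k:ℝ) := by exact_mod_cast hk
  have hn : 1 ≤ n := le_trans (by omega) h
  set V := {s : Finset (Fin n) // s.card = k} with hV
  -- the weight function for the upper bound
  set w : Finset V → ℝ :=
    fun S => ((Finset.univ.filter (fun i : Fin n => star n k i = S)).card : ℝ) / k with hw
  have hmem : (n : ℝ) / (k : ℝ) ∈ { q : ℝ | ∃ w : Finset V → ℝ, (∀ s, 0 ≤ w s) ∧
      (∀ s, w s ≠ 0 → ∀ u ∈ s, ∀ v ∈ s, ¬ (kneserGraph n k).Adj u v) ∧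
      (∀ v : V, 1 ≤ ∑ s ∈ Finset.univ.filter (fun s : Finset V => v ∈ s), w s) ∧
      (∑ s, w s = q) } := by
    refine ⟨w, fun S => by positivity, ?_, ?_, ?_⟩
    · intro S hS u hu v hv hadj
      have : (Finset.univ.filter (fun i : Fin n => star n k i = S)).Nonempty := by
        rw [Finset.nonempty_iff_ne_empty]
        intro he
        apply hS
        simp [hw, he]
      obtain ⟨i, hi⟩ := this
      have hiS : star n k i = S := (Finset.mem_filter.1 hi).2
      have hiu : i ∈ u.1 := mem_star.1 (by rw [hiS]; exact hu)
      have hiv : i ∈ v.1 := mem_star.1 (by rw [hiS]; exact hv)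
      exact Finset.disjoint_left.mp hadj.2 hiu hiv
    · intro v
      have hcount : (v.1.card) =
          ∑ S ∈ Finset.univ.filter (fun S : Finset V => v ∈ S),
            (Finset.univ.filter (fun i : Fin n => star n k i = S)).card := by
        have h1 : (v.1.card) =
            ∑ S ∈ Finset.univ.filter (fun S : Finset V => v ∈ S),
              (v.1.filter (fun i : Fin n => star n k i = S)).card := by
          apply Finset.card_eq_sum_card_fiberwise
          intro i hi
          simp only [Finset.mem_coe, Finset.mem_filter, Finset.mem_univ, true_and]
          exact mem_star.2 hi
        rw [h1]
        apply Finset.sum_congr rfl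
        intro S hS
        congr 1
        ext i
        simp only [Finset.mem_filter, Finset.mem_univ, true_and, and_iff_right_iff_imp]
        intro hiS
        have : v ∈ star n k i := by rw [hiS]; exact (Finset.mem_filter.1 hS).2
        exact mem_star.1 this
      have : ∑ S ∈ Finset.univ.filter (fun S : Finset V => v ∈ S), w S
          = (v.1.card : ℝ) / k := by
        simp only [hw, ← Finset.sum_div]
        rw [hcount]
        push_cast
        ring
      rw [this, v.2, div_self (ne_of_gt hk0)]
    · have hcount : (n : ℕ) =
          ∑ S : Finset V, (Finset.univ.filter (fun i : Fin n => star n k i = S)).card := by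
        have := Finset.card_eq_sum_card_fiberwise
          (f := fun i : Fin n => star n k i) (s := Finset.univ) (t := Finset.univ)
          (fun i _ => Finset.mem_univ _)
        simpa using this
      simp only [hw, ← Finset.sum_div]
      rw [← Nat.cast_sum, ← hcount]
  have hlb : ∀ q ∈ { q : ℝ | ∃ w : Finset V → ℝ, (∀ s, 0 ≤ w s) ∧
      (∀ s, w s ≠ 0 → ∀ u ∈ s, ∀ v ∈ s, ¬ (kneserGraph n k).Adj u v) ∧
      (∀ v : V, 1 ≤ ∑ s ∈ Finset.univ.filter (fun s : Finset V => v ∈ s), w s) ∧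
      (∑ s, w s = q) }, (n : ℝ) / (k : ℝ) ≤ q := by
    rintro q ⟨f, hf0, hind, hcov, hsum⟩
    set α : ℕ := (n - 1).choose (k - 1) with hα
    have hα0 : 0 < α := Nat.choose_pos (by omega)
    -- independent sets have size at most α by Erdős–Ko–Rado
    have hEKR : ∀ S : Finset V, f S ≠ 0 → (S.card : ℝ) ≤ (α : ℝ) := by
      intro S hS
      have hind' := hind S hS
      set 𝒜 : Finset (Finset (Fin n)) := S.image Subtype.val with h𝒜
      have hcard : 𝒜.card = S.card := Finset.card_image_of_injective _ Subtype.val_injective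
      have hint : (𝒜 : Set (Finset (Fin n))).Intersecting := by
        intro A hA B hB hdis
        simp only [h𝒜, Finset.coe_image, Set.mem_image, Finset.mem_coe] at hA hB
        obtain ⟨u, hu, rfl⟩ := hA
        obtain ⟨v, hv, rfl⟩ := hB
        rcases eq_or_ne u v with rfl | huv
        · have he : u.1 = ∅ := (Finset.disjoint_self_iff_empty _).1 hdis
          have hcu := u.2
          rw [he] at hcu
          simp at hcu
          omega
        · exact hind' u hu v hv ⟨huv, hdis⟩
      have hsized : (𝒜 : Set (Finset (Fin n))).Sized k := by
        intro A hA
        simp only [h𝒜, Finset.coe_image, Set.mem_image, Finset.mem_coe] at hA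
        obtain ⟨u, _, rfl⟩ := hA
        exact u.2
      have := Finset.erdos_ko_rado hint hsized (by omega)
      rw [hcard] at this
      exact_mod_cast this
    -- double counting
    have hswap : ∑ v : V, ∑ S ∈ Finset.univ.filter (fun S : Finset V => v ∈ S), f S
        = ∑ S : Finset V, (S.card : ℝ) * f S := by
      simp only [Finset.sum_filter]
      rw [Finset.sum_comm]
      apply Finset.sum_congr rfl
      intro S _
      rw [Finset.sum_ite_mem, Finset.univ_inter, Finset.sum_const, nsmul_eq_mul]
    have hN : ((Fintype.card V : ℕ) : ℝ) ≤ q * α := by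
      calc ((Fintype.card V : ℕ) : ℝ) = ∑ _v : V, (1:ℝ) := by
              simp [Finset.card_univ]
        _ ≤ ∑ v : V, ∑ S ∈ Finset.univ.filter (fun S : Finset V => v ∈ S), f S :=
              Finset.sum_le_sum (fun v _ => hcov v)
        _ = ∑ S : Finset V, (S.card : ℝ) * f S := hswap
        _ ≤ ∑ S : Finset V, (α : ℝ) * f S := by
              apply Finset.sum_le_sum
              intro S _
              rcases eq_or_ne (f S) 0 with h0 | h0
              · simp [h0]
              · exact mul_le_mul_of_nonneg_right (hEKR S h0) (hf0 S)
        _ = q * α := by rw [← Finset.mul_sum, hsum]; ring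
    have hcardV : Fintype.card V = n.choose k := by
      have := Fintype.card_finset_len (α := Fin n) k
      rwa [Fintype.card_fin] at this
    -- identity: n * α = n.choose k * k
    have hid : n * α = n.choose k * k := by
      have := Nat.add_one_mul_choose_eq (n - 1) (k - 1)
      rw [hα]
      have h1 : n - 1 + 1 = n := by omega
      have h2 : k - 1 + 1 = k := by omega
      rw [h1, h2] at this
      exact this
    rw [hcardV] at hN
    have hα0' : (0:ℝ) < (α:ℝ) := by exact_mod_cast hα0
    rw [div_le_iff₀ hk0]
    have hqα : ((n.choose k : ℕ) : ℝ) ≤ q * α := hN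
    have : ((n:ℝ) * α) = ((n.choose k : ℕ) : ℝ) * k := by exact_mod_cast hid
    nlinarith [hqα, hα0', hk0]
  exact le_antisymm (csInf_le ⟨_, hlb⟩ hmem) (le_csInf ⟨_, hmem⟩ hlb)
end

section
/- Let G be a graph, let (X_1,...,X_n) be a partition of V(G) as in Lemma 4 (each G[X_i] bipartite and connected; for i < j every vertex of X_j with a neighbor in X_i has neighbors on both sides of the bipartition of G[X_i]), and let T_i be a spanning tree of G[X_i] for each i. Let I ⊆ [n] and let f be a 2-coloring of ∪_{i∈I} V(T_i) that restricts to a proper coloring on each T_i, i ∈ I. If for distinct i, j ∈ I there exists an edge of G connecting V(T_i) and V(T_j), then there exists such an edge that is monochromatic under f. -/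
set_option linter.unusedVariables false

open SimpleGraph

lemma aux_same {V : Type*} {G : SimpleGraph V} (S : G.Subgraph)
    (hconn : S.coe.Connected) (f g : V → Bool)
    (hf : ∀ u v : V, S.Adj u v → f u ≠ f v)
    (hg : ∀ u v : V, S.Adj u v → g u ≠ g v) :
    ∀ u v : S.verts, ((f u = g u) ↔ (f v = g v)) := by
  intro u v
  obtain ⟨p⟩ := hconn u v
  induction p with
  | nil => rfl
  | cons h p ih =>
    rename_i a b c
    have hadj : S.Adj a b := h
    have h1 := hf a b hadj
    have h2 := hg a b hadj
    refine Iff.trans ?_ ih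
    revert h1 h2
    cases f (a : V) <;> cases f (b : V) <;> cases g (a : V) <;> cases g (b : V) <;> simp

lemma aux_proper {V : Type*} {G : SimpleGraph V} (S : G.Subgraph)
    (hconn : S.coe.Connected) (f g : V → Bool)
    (hf : ∀ u v : V, S.Adj u v → f u ≠ f v)
    (hg : ∀ u ∈ S.verts, ∀ v ∈ S.verts, G.Adj u v → g u ≠ g v) :
    ∀ u ∈ S.verts, ∀ v ∈ S.verts, G.Adj u v → f u ≠ f v := by
  intro u hu v hv hadj
  have hg' : ∀ a b : V, S.Adj a b → g a ≠ g b := by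
    intro a b hab
    exact hg a hab.fst_mem b hab.snd_mem (S.adj_sub hab)
  have h := aux_same S hconn f g hf hg' ⟨u, hu⟩ ⟨v, hv⟩
  have h2 := hg u hu v hv hadj
  revert h h2
  cases f u <;> cases f v <;> cases g u <;> cases g v <;> simp

/-- Claim (∗): given a partition as in the decomposition lemma, spanning trees `T i`
of the parts, and a 2-coloring `f` proper on each tree `T i`, `i ∈ I`, any edge of `G`
between two parts indexed by `I` can be upgraded to a monochromatic such edge. -/
theorem stmt15 {V : Type*} [Fintype V] (G : SimpleGraph V) (n : ℕ) (X : Fin n → Set V)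
    (hne : ∀ i, (X i).Nonempty)
    (hdisj : ∀ i j, i ≠ j → Disjoint (X i) (X j))
    (hcover : (⋃ i, X i) = Set.univ)
    (hconn : ∀ i, (G.induce (X i)).Connected)
    (hbip : ∀ i, ∃ g : V → Bool, ∀ u ∈ X i, ∀ v ∈ X i, G.Adj u v → g u ≠ g v)
    (hX2 : ∀ i j : Fin n, i < j → ∀ v ∈ X j, (∃ u ∈ X i, G.Adj v u) →
      ∀ g : V → Bool, (∀ u ∈ X i, ∀ w ∈ X i, G.Adj u w → g u ≠ g w) →
        ∃ u₁ ∈ X i, ∃ u₂ ∈ X i, G.Adj v u₁ ∧ G.Adj v u₂ ∧ g u₁ ≠ g u₂)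
    (T : Fin n → G.Subgraph)
    (hTverts : ∀ i, (T i).verts = X i)
    (hTtree : ∀ i, (T i).coe.IsTree)
    (I : Set (Fin n)) (f : V → Bool)
    (hf : ∀ i ∈ I, ∀ u v : V, (T i).Adj u v → f u ≠ f v)
    (i j : Fin n) (hi : i ∈ I) (hj : j ∈ I) (hij : i ≠ j)
    (hedge : ∃ u ∈ X i, ∃ v ∈ X j, G.Adj u v) :
    ∃ u ∈ X i, ∃ v ∈ X j, G.Adj u v ∧ f u = f v := by
  obtain ⟨u, hu, v, hv, huv⟩ := hedge
  -- f is proper on G restricted to each part indexed by I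
  have key : ∀ k ∈ I, ∀ a ∈ X k, ∀ b ∈ X k, G.Adj a b → f a ≠ f b := by
    intro k hk
    obtain ⟨g, hg⟩ := hbip k
    have := aux_proper (T k) (hTtree k).1 f g (hf k hk)
      (by rw [hTverts k]; exact hg)
    rw [hTverts k] at this
    exact this
  rcases lt_or_gt_of_ne hij with hlt | hlt
  · obtain ⟨u₁, hu₁, u₂, hu₂, ha₁, ha₂, hne'⟩ :=
      hX2 i j hlt v hv ⟨u, hu, huv.symm⟩ f (key i hi)
    by_cases h : f u₁ = f v
    · exact ⟨u₁, hu₁, v, hv, ha₁.symm, h⟩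
    · refine ⟨u₂, hu₂, v, hv, ha₂.symm, ?_⟩
      revert h hne'
      cases f v <;> cases f u₁ <;> cases f u₂ <;> simp
  · obtain ⟨v₁, hv₁, v₂, hv₂, ha₁, ha₂, hne'⟩ :=
      hX2 j i hlt u hu ⟨v, hv, huv⟩ f (key j hj)
    by_cases h : f u = f v₁
    · exact ⟨u, hu, v₁, hv₁, ha₁, h⟩
    · refine ⟨u, hu, v₂, hv₂, ha₂, ?_⟩
      revert h hne'
      cases f u <;> cases f v₁ <;> cases f v₂ <;> simp
end

section
/- Let c be the proper coloring of G obtained from a partition (X_1,...,X_n) with each G[X_i] connected bipartite with sides A_i, B_i, by assigning color 2i−1 to vertices of A_i and color 2i to vertices of B_i. Then for any zigzag z_1 < ... < z_m with respect to c, the set M = {z_i z_j : i < j, z_i and z_j lie in the same part X_ℓ} is a matching, and each pair in M consists of consecutive zigzag vertices z_i, z_{i+1} and forms an edge of G. -/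
set_option linter.unusedVariables false

open SimpleGraph

/-- For the coloring `c` assigning colors `2i+1`/`2i+2` to the two sides of the
bipartition of `G[X i]`, any zigzag `z` has the property that pairs of zigzag vertices
lying in a common part are consecutive in the zigzag, form edges of `G`, and the set
`M` of such pairs is a matching (distinct pairs are disjoint). -/
theorem stmt17 {V : Type*} [Fintype V] (G : SimpleGraph V) (n : ℕ)
    (X A B : Fin n → Set V)
    (hAB : ∀ i, A i ∪ B i = X i)
    (hABdisj : ∀ i, Disjoint (A i) (B i))
    (hdisj : ∀ i j, i ≠ j → Disjoint (X i) (X j))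
    (hcover : (⋃ i, X i) = Set.univ)
    (hconn : ∀ i, (G.induce (X i)).Connected)
    (hbipA : ∀ i, ∀ u ∈ A i, ∀ v ∈ A i, ¬ G.Adj u v)
    (hbipB : ∀ i, ∀ u ∈ B i, ∀ v ∈ B i, ¬ G.Adj u v)
    (c : V → ℕ)
    (hcA : ∀ i : Fin n, ∀ v ∈ A i, c v = 2 * i.val + 1)
    (hcB : ∀ i : Fin n, ∀ v ∈ B i, c v = 2 * i.val + 2)
    (m : ℕ) (z : Fin m → V) (hz : IsZigzag G c z) :
    ∀ i j : Fin m, i < j → (∃ ℓ, z i ∈ X ℓ ∧ z j ∈ X ℓ) →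
      (j.val = i.val + 1 ∧ G.Adj (z i) (z j)) ∧
      (∀ i' j' : Fin m, i' < j' → (∃ ℓ, z i' ∈ X ℓ ∧ z j' ∈ X ℓ) →
        i ≠ i' → i ≠ j' ∧ j ≠ i' ∧ j ≠ j') := by
  have key : ∀ (i j : Fin m), i < j → (∃ ℓ, z i ∈ X ℓ ∧ z j ∈ X ℓ) →
      j.val = i.val + 1 ∧ (∃ ℓ : Fin n, c (z i) = 2 * ℓ.val + 1 ∧ c (z j) = 2 * ℓ.val + 2) ∧
        G.Adj (z i) (z j) := by
    rintro i j hij ⟨ℓ, hi, hj⟩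
    have hiC : c (z i) = 2 * ℓ.val + 1 ∨ c (z i) = 2 * ℓ.val + 2 := by
      have : z i ∈ A ℓ ∪ B ℓ := (hAB ℓ).symm ▸ hi
      rcases this with h | h
      · exact Or.inl (hcA ℓ _ h)
      · exact Or.inr (hcB ℓ _ h)
    have hjC : c (z j) = 2 * ℓ.val + 1 ∨ c (z j) = 2 * ℓ.val + 2 := by
      have : z j ∈ A ℓ ∪ B ℓ := (hAB ℓ).symm ▸ hj
      rcases this with h | h
      · exact Or.inl (hcA ℓ _ h)
      · exact Or.inr (hcB ℓ _ h)
    have hlt : c (z i) < c (z j) := hz.1 hij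
    have hci : c (z i) = 2 * ℓ.val + 1 := by omega
    have hcj : c (z j) = 2 * ℓ.val + 2 := by omega
    have hijv : i.val < j.val := hij
    have hsucc : j.val = i.val + 1 := by
      by_contra h
      have hk : i.val + 1 < m := lt_trans (by omega) j.2
      have h1 : c (z i) < c (z ⟨i.val + 1, hk⟩) := hz.1 (by simp [Fin.lt_def])
      have h2 : c (z ⟨i.val + 1, hk⟩) < c (z j) := hz.1 (by simp [Fin.lt_def]; omega)
      omega
    by_cases hpar : i.val % 2 = 0
    · exact ⟨hsucc, ⟨ℓ, hci, hcj⟩, hz.2 i j hpar (by omega)⟩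
    · exact ⟨hsucc, ⟨ℓ, hci, hcj⟩, (hz.2 j i (by omega) (by omega)).symm⟩
  intro i j hij hex
  obtain ⟨hji, ⟨ℓ, hci, hcj⟩, hadj⟩ := key i j hij hex
  refine ⟨⟨hji, hadj⟩, ?_⟩
  intro i' j' hij' hex' hne
  obtain ⟨hji', ⟨ℓ', hci', hcj'⟩, _⟩ := key i' j' hij' hex'
  refine ⟨?_, ?_, ?_⟩
  · intro h; rw [h] at hci; omega
  · intro h; rw [h] at hcj; omega
  · intro h
    apply hne
    have := congrArg Fin.val h
    exact Fin.ext (by omega)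
end
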